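/- arXiv:1904.00573 — 2 statements merged into one kernel-verified Lean document; each statement's English description precedes it below -/
import Mathlib

section
/- Let n ≥ 2, m ≥ 2, q be positive integers with (2q/(n−1) + 2) ∈ nℤ, and let g be defined by 2g/(n−1) + 2 = m(2q/(n−1) + 2). Let x be a positive integer. Set K² := (4((m−1)/m)(q/(n−1)+1)(n−1) − n)·x and χ := ((m−1)/(2m))·(q/(n−1)+1)(n−1)·x. Then K²/χ = 8 − 2n(g+n−1)/((g−q)(q+n−1)). -/
set_option maxHeartbeats 2000000

/-- the slope of the example in Section 5 equals
`8 − 2n(g+n−1)/((g−q)(q+n−1))`. -/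
theorem stmt_16 (n m q g x : ℤ) (hn : 2 ≤ n) (hm : 2 ≤ m) (hq : 0 < q) (hx : 0 < x)
    (hQ : ∃ k : ℤ, 2 * (q : ℝ) / ((n : ℝ) - 1) + 2 = (n : ℝ) * (k : ℝ))
    (hg : 2 * (g : ℝ) / ((n : ℝ) - 1) + 2 = (m : ℝ) * (2 * (q : ℝ) / ((n : ℝ) - 1) + 2)) :
    ((4 * (((m : ℝ) - 1) / (m : ℝ)) * ((q : ℝ) / ((n : ℝ) - 1) + 1) * ((n : ℝ) - 1) -
          (n : ℝ)) * (x : ℝ)) /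
        ((((m : ℝ) - 1) / (2 * (m : ℝ))) * ((q : ℝ) / ((n : ℝ) - 1) + 1) * ((n : ℝ) - 1) *
          (x : ℝ)) =
      8 - 2 * (n : ℝ) * ((g : ℝ) + (n : ℝ) - 1) /
        (((g : ℝ) - (q : ℝ)) * ((q : ℝ) + (n : ℝ) - 1)) := by
  have hnR : (2 : ℝ) ≤ (n : ℝ) := by exact_mod_cast hn
  have hmR : (2 : ℝ) ≤ (m : ℝ) := by exact_mod_cast hm
  have hqR : (0 : ℝ) < (q : ℝ) := by exact_mod_cast hq
  have hxR : (0 : ℝ) < (x : ℝ) := by exact_mod_cast hx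
  have hn1 : (n : ℝ) - 1 ≠ 0 := by linarith
  have hm0 : (m : ℝ) ≠ 0 := by linarith
  have hm1 : (m : ℝ) - 1 ≠ 0 := by linarith
  have hqn : (q : ℝ) + (n : ℝ) - 1 ≠ 0 := by linarith
  have hx0 : (x : ℝ) ≠ 0 := ne_of_gt hxR
  -- from hg: g = m*(q + n - 1) - (n - 1)
  have hg' : (g : ℝ) = (m : ℝ) * ((q : ℝ) + (n : ℝ) - 1) - ((n : ℝ) - 1) := by
    field_simp at hg
    linarith
  have hgq : (g : ℝ) - (q : ℝ) = ((m : ℝ) - 1) * ((q : ℝ) + (n : ℝ) - 1) := by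
    rw [hg']; ring
  have hgq0 : (g : ℝ) - (q : ℝ) ≠ 0 := by
    rw [hgq]; exact mul_ne_zero hm1 hqn
  have h2 : ((g : ℝ) - (q : ℝ)) * ((q : ℝ) + (n : ℝ) - 1)
      = ((m : ℝ) - 1) * ((q : ℝ) + (n : ℝ) - 1) ^ 2 := by rw [hg']; ring
  have h3 : (g : ℝ) + (n : ℝ) - 1 = (m : ℝ) * ((q : ℝ) + (n : ℝ) - 1) := by rw [hg']; ring
  have hqn' : (q : ℝ) + ((n : ℝ) - 1) ≠ 0 := by linarith
  have e1 : (q : ℝ) / ((n : ℝ) - 1) + 1 = ((q : ℝ) + ((n : ℝ) - 1)) / ((n : ℝ) - 1) := by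
    field_simp
  rw [h2, h3, e1]
  field_simp [hqn']
  ring
end

section
/- Let n ≥ 2, q > 0, d ≥ 2 be integers, and let g' ≥ q. Suppose a finite morphism π : E → ℙ¹ from a smooth projective curve E has degree d_E ≥ 1, and θ' : B' → ℙ¹ has degree d with g(B') = g' and (d−1)·#Δ ≥ 2g' − 2 + 2d (Hurwitz bound on branch points Δ). If each point of E ∩ R̄_all not in E ∩ R̄_r has local intersection number r_p ≥ 2 with Σ r_p = d_E·#Δ, and 2d_E − 2 ≥ Σ(r_p − 1), and g' ≥ d − 1, then #(E ∩ R̄_r) ≥ d_E·(2g'/(d−1) − 2) + 4 ≥ 2g'/(d−1) + 2. -/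
/-- counting estimate of Lemma 4.5:
`#(E ∩ R̄_r) ≥ d_E(2g'/(d−1) − 2) + 4 ≥ 2g'/(d−1) + 2`. -/
theorem stmt_19 (n q d dE : ℤ) (hn : 2 ≤ n) (hq : 0 < q) (hd : 2 ≤ d) (hdE : 1 ≤ dE)
    (g' : ℝ) (hg'q : (q : ℝ) ≤ g') (hg'd : (d : ℝ) - 1 ≤ g')
    (Δcard : ℕ) (hΔ : 2 * g' - 2 + 2 * (d : ℝ) ≤ ((d : ℝ) - 1) * (Δcard : ℝ))
    {P : Type*} (Pall Pr : Finset P) (hsub : Pr ⊆ Pall)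
    (rp : P → ℕ)
    (hr2 : ∀ p ∈ Pall, p ∉ Pr → 2 ≤ rp p)
    (hr1 : ∀ p ∈ Pall, 1 ≤ rp p)
    (hsum : ∑ p ∈ Pall, ((rp p : ℝ)) = (dE : ℝ) * (Δcard : ℝ))
    (hhur : ∑ p ∈ Pall, ((rp p : ℝ) - 1) ≤ 2 * (dE : ℝ) - 2) :
    (dE : ℝ) * (2 * g' / ((d : ℝ) - 1) - 2) + 4 ≤ (Pr.card : ℝ) ∧
    2 * g' / ((d : ℝ) - 1) + 2 ≤ (dE : ℝ) * (2 * g' / ((d : ℝ) - 1) - 2) + 4 := by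
  have hc : (0 : ℝ) < (d : ℝ) - 1 := by
    have : (2 : ℝ) ≤ (d : ℝ) := by exact_mod_cast hd
    linarith
  have hdE1 : (1 : ℝ) ≤ (dE : ℝ) := by exact_mod_cast hdE
  set t : ℝ := 2 * g' / ((d : ℝ) - 1) with ht
  have htΔ : t + 2 ≤ (Δcard : ℝ) := by
    rw [ht, div_add' _ _ _ (ne_of_gt hc), div_le_iff₀ hc]
    nlinarith
  classical
  have ht2 : 2 ≤ t := by
    rw [ht, le_div_iff₀ hc]
    linarith
  -- sum over Pall equals card Pall less than stuff
  have hsplit : ∑ p ∈ Pall, ((rp p : ℝ) - 1) = (dE : ℝ) * (Δcard : ℝ) - (Pall.card : ℝ) := by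
    rw [Finset.sum_sub_distrib, hsum, Finset.sum_const, nsmul_eq_mul, mul_one]
  have hcarddiff : ((Pall.card : ℝ) - (Pr.card : ℝ)) ≤ ∑ p ∈ Pall, ((rp p : ℝ) - 1) := by
    have h1 : ∑ p ∈ Pall \ Pr, ((rp p : ℝ) - 1) ≤ ∑ p ∈ Pall, ((rp p : ℝ) - 1) := by
      apply Finset.sum_le_sum_of_subset_of_nonneg (Finset.sdiff_subset)
      intro p hp _
      have := hr1 p hp
      have : (1 : ℝ) ≤ (rp p : ℝ) := by exact_mod_cast this
      linarith
    have h2 : ((Pall \ Pr).card : ℝ) ≤ ∑ p ∈ Pall \ Pr, ((rp p : ℝ) - 1) := by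
      calc ((Pall \ Pr).card : ℝ) = ∑ _p ∈ Pall \ Pr, (1 : ℝ) := by
            simp
        _ ≤ ∑ p ∈ Pall \ Pr, ((rp p : ℝ) - 1) := by
            apply Finset.sum_le_sum
            intro p hp
            rw [Finset.mem_sdiff] at hp
            have := hr2 p hp.1 hp.2
            have : (2 : ℝ) ≤ (rp p : ℝ) := by exact_mod_cast this
            linarith
    have h3 : ((Pall \ Pr).card : ℝ) = (Pall.card : ℝ) - (Pr.card : ℝ) := by
      rw [Finset.card_sdiff_of_subset hsub]
      have := Finset.card_le_card hsub
      push_cast [Nat.cast_sub this]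
      ring
    linarith
  have key1 : (dE : ℝ) * (t - 2) + 4 ≤ (Pr.card : ℝ) := by
    have h4 : (dE : ℝ) * (t - 2) ≤ (dE : ℝ) * ((Δcard : ℝ) - 4) := by
      apply mul_le_mul_of_nonneg_left (by linarith) (by linarith)
    nlinarith [hsplit, hcarddiff, hhur]
  refine ⟨key1, ?_⟩
  nlinarith [mul_le_mul_of_nonneg_right hdE1 (by linarith : (0:ℝ) ≤ t - 2)]
end
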